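/- arXiv:1210.4068 — 5 statements merged into one kernel-verified Lean document; each statement's English description precedes it below -/
import Mathlib

section
/- For any integers p ≥ 2, r ≥ 2, and 1 ≤ m ≤ ⌊r(p-1)/2⌋, one has |Ω^m_{p,r}| > |Ω^{m-1}_{p,r}|, i.e. the coefficients of (1+x+...+x^{p-1})^r are strictly increasing up to the middle. -/
open Polynomial

/-- The coefficient of `x^m` in `(1 + x + ⋯ + x^(p-1))^r`. -/
noncomputable def Omega (p r m : ℕ) : ℕ :=
  (((∑ i ∈ Finset.range p, (X : Polynomial ℕ) ^ i) ^ r).coeff m)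

namespace OmegaAux

noncomputable def g (p : ℕ) : Polynomial ℕ := ∑ i ∈ Finset.range p, (X : Polynomial ℕ) ^ i

lemma omega_eq (p r m : ℕ) : Omega p r m = ((g p) ^ r).coeff m := rfl

lemma coeff_g (p j : ℕ) : (g p).coeff j = if j < p then 1 else 0 := by
  simp [g, coeff_X_pow, Finset.sum_ite_eq', Finset.mem_range]

lemma natDegree_g (p : ℕ) : (g p).natDegree ≤ p - 1 := by
  apply natDegree_sum_le_of_forall_le
  intro i hi
  simpa using Nat.le_sub_one_of_lt (Finset.mem_range.mp hi)

lemma conv (p s m : ℕ) : Omega p (s+1) m =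
    ∑ j ∈ Finset.range (m+1), (if j < p then 1 else 0) * Omega p s (m - j) := by
  simp only [omega_eq, pow_succ, mul_comm ((g p)^s) (g p), coeff_mul,
    Finset.Nat.sum_antidiagonal_eq_sum_range_succ_mk]
  exact Finset.sum_congr rfl fun j _ => by rw [coeff_g]

lemma omega_pos (p s m : ℕ) (hp : 1 ≤ p) (hm : m ≤ s * (p - 1)) : 0 < Omega p s m := by
  induction s generalizing m with
  | zero =>
    simp only [Nat.zero_mul, Nat.le_zero] at hm
    subst hm
    simp [omega_eq]
  | succ s ih =>
    rw [conv]
    have hj : min (p - 1) m ∈ Finset.range (m + 1) := by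
      simp [Nat.lt_succ_iff]
    refine lt_of_lt_of_le ?_ (Finset.single_le_sum (f := fun j =>
      (if j < p then 1 else 0) * Omega p s (m - j)) (fun i _ => Nat.zero_le _) hj)
    have h1 : min (p - 1) m < p := lt_of_le_of_lt (min_le_left _ _) (by omega)
    show 0 < (if min (p - 1) m < p then 1 else 0) * Omega p s (m - min (p - 1) m)
    rw [if_pos h1, one_mul]
    apply ih
    have hx : (s+1)*(p-1) = s*(p-1) + (p-1) := by ring
    omega

lemma reflect_g (p : ℕ) (hp : 1 ≤ p) : reflect (p - 1) (g p) = g p := by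
  ext i
  rw [coeff_reflect, coeff_g, coeff_g]
  rcases le_or_gt i (p - 1) with h | h
  · rw [revAt_le h, if_pos (show p - 1 - i < p by omega), if_pos (show i < p by omega)]
  · rw [revAt_eq_self_of_lt h]

lemma reflect_g_pow (p r : ℕ) (hp : 1 ≤ p) : reflect (r * (p - 1)) ((g p) ^ r) = (g p) ^ r := by
  induction r with
  | zero => simp [reflect_one]
  | succ r ih =>
    have hd : ((g p) ^ r).natDegree ≤ r * (p - 1) :=
      natDegree_pow_le.trans (Nat.mul_le_mul_left r (natDegree_g p))
    calc reflect ((r+1) * (p - 1)) ((g p) ^ (r+1))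
        = reflect (r * (p - 1) + (p - 1)) ((g p) ^ r * g p) := by rw [pow_succ, add_mul, one_mul]
      _ = reflect (r * (p - 1)) ((g p) ^ r) * reflect (p - 1) (g p) :=
          reflect_mul _ _ hd (natDegree_g p)
      _ = (g p) ^ (r+1) := by rw [ih, reflect_g p hp, pow_succ]

lemma omega_symm (p r k : ℕ) (hp : 1 ≤ p) (hk : k ≤ r * (p - 1)) :
    Omega p r (r * (p - 1) - k) = Omega p r k := by
  conv_rhs => rw [omega_eq, ← reflect_g_pow p r hp, coeff_reflect, revAt_le hk]
  rfl

lemma omega_rec (p s m : ℕ) (hp : 1 ≤ p) (hm : 1 ≤ m) :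
    Omega p (s+1) m + (if p ≤ m then Omega p s (m - p) else 0) =
      Omega p (s+1) (m-1) + Omega p s m := by
  rw [conv, conv, Finset.sum_range_succ' _ m]
  have hm1 : m - 1 + 1 = m := by omega
  rw [hm1]
  have h0 : (if 0 < p then 1 else 0) * Omega p s (m - 0) = Omega p s m := by
    rw [if_pos (show 0 < p by omega), one_mul, Nat.sub_zero]
  rw [h0]
  have hre : (∑ k ∈ Finset.range m, (if k + 1 < p then 1 else 0) * Omega p s (m - (k + 1))) =
      ∑ k ∈ Finset.range m, (if k + 1 < p then 1 else 0) * Omega p s (m - 1 - k) :=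
    Finset.sum_congr rfl fun k _ => by rw [show m - (k + 1) = m - 1 - k by omega]
  rw [hre]
  have main : (∑ k ∈ Finset.range m, (if k + 1 < p then 1 else 0) * Omega p s (m - 1 - k)) +
      (if p ≤ m then Omega p s (m - p) else 0) =
      ∑ j ∈ Finset.range m, (if j < p then 1 else 0) * Omega p s (m - 1 - j) := by
    rcases lt_or_ge m p with hmp | hmp
    · rw [if_neg (show ¬ (p ≤ m) by omega), add_zero]
      refine Finset.sum_congr rfl fun j hj => ?_
      have hj' := Finset.mem_range.mp hj
      rw [if_pos (show j + 1 < p by omega), if_pos (show j < p by omega)]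
    · rw [if_pos hmp]
      have hpm : p - 1 ∈ Finset.range m := Finset.mem_range.mpr (by omega)
      rw [← Finset.add_sum_erase _ _ hpm, ← Finset.add_sum_erase _
        (fun j => (if j < p then 1 else 0) * Omega p s (m - 1 - j)) hpm]
      have e1 : (if p - 1 + 1 < p then 1 else 0) * Omega p s (m - 1 - (p - 1)) = 0 := by
        rw [if_neg (show ¬ (p - 1 + 1 < p) by omega), zero_mul]
      have e2 : (if p - 1 < p then 1 else 0) * Omega p s (m - 1 - (p - 1)) = Omega p s (m - p) := by
        rw [if_pos (show p - 1 < p by omega), one_mul]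
        congr 1
        omega
      rw [e1, e2, zero_add, add_comm]
      congr 1
      refine Finset.sum_congr rfl fun j hj => ?_
      have hj' : j ≠ p - 1 := (Finset.mem_erase.mp hj).1
      rcases lt_or_ge j (p - 1) with h | h
      · rw [if_pos (show j + 1 < p by omega), if_pos (show j < p by omega)]
      · rw [if_neg (show ¬ (j + 1 < p) by omega), if_neg (show ¬ (j < p) by omega)]
  omega

lemma chain (p r L : ℕ) (H : ∀ k, 1 ≤ k → k ≤ L → Omega p r (k-1) < Omega p r k) :
    ∀ b, b ≤ L → ∀ a, a < b → Omega p r a < Omega p r b := by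
  intro b
  induction b with
  | zero => omega
  | succ b ih =>
    intro hb a ha
    have h1 : Omega p r b < Omega p r (b+1) := by
      have := H (b+1) (by omega) hb
      simpa using this
    rcases Nat.lt_succ_iff_lt_or_eq.mp ha with h | h
    · exact lt_trans (ih (by omega) a h) h1
    · rw [h]; exact h1

end OmegaAux

theorem Omega_strict_mono (p r m : ℕ) (hp : 2 ≤ p) (hr : 2 ≤ r)
    (hm1 : 1 ≤ m) (hm2 : m ≤ r * (p - 1) / 2) :
    Omega p r (m - 1) < Omega p r m := by
  induction r, hr using Nat.le_induction generalizing m with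
  | base =>
    have hmp : m < p := by omega
    have key := OmegaAux.omega_rec p 1 m (by omega) hm1
    rw [if_neg (show ¬ (p ≤ m) by omega)] at key
    norm_num at key
    have hpos : 0 < Omega p 1 m := OmegaAux.omega_pos p 1 m (by omega) (by omega)
    omega
  | succ r hr ih =>
    have key := OmegaAux.omega_rec p r m (by omega) hm1
    have h2m : 2 * m ≤ (r+1) * (p-1) := by
      have := Nat.div_mul_le_self ((r+1) * (p-1)) 2
      omega
    set S := r * (p - 1) with hS
    have hSe : (r+1) * (p-1) = S + (p-1) := by ring
    have hSp : p ≤ S := by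
      have : 2 * (p - 1) ≤ r * (p - 1) := Nat.mul_le_mul_right _ hr
      omega
    have hmono := OmegaAux.chain p r (S / 2) (fun k hk1 hk2 => ih k hk1 hk2)
    have hT : (if p ≤ m then Omega p r (m - p) else 0) < Omega p r m := by
      rcases lt_or_ge m p with hmp | hmp
      · rw [if_neg (by omega)]
        exact OmegaAux.omega_pos p r m (by omega) (by omega)
      · rw [if_pos hmp]
        rcases le_or_gt m (S / 2) with hms | hms
        · exact hmono m hms (m - p) (by omega)
        · have hmS : m < S := by omega
          rw [← OmegaAux.omega_symm p r m (by omega) (by omega)]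
          exact hmono (S - m) (by omega) (m - p) (by omega)
    omega
end

section
/- For any integers p ≥ 2 and r ≥ 1, the coefficient |Ω^m_{p,r}| of x^m in (1+x+...+x^{p-1})^r attains its maximum over 0 ≤ m ≤ r(p-1) at m = ⌊r(p-1)/2⌋. -/
open Polynomial

namespace OmegaAux

/-- monotone up to the middle -/
lemma mono_le (a : ℕ → ℕ) (n : ℕ)
    (hmono : ∀ m, 2 * m + 1 ≤ n → a m ≤ a (m + 1)) :
    ∀ j k, k ≤ j → 2 * j ≤ n + 1 → a k ≤ a j := by
  intro j
  induction j with
  | zero => intro k hk _; rw [Nat.le_zero.mp hk]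
  | succ j ih =>
    intro k hk hj
    rcases Nat.eq_or_lt_of_le hk with h | h
    · exact h ▸ le_rfl
    · exact le_trans (ih k (by omega) (by omega)) (hmono j (by omega))

lemma U_of (a : ℕ → ℕ) (n : ℕ)
    (hsymm : ∀ m ≤ n, a m = a (n - m))
    (hmono : ∀ m, 2 * m + 1 ≤ n → a m ≤ a (m + 1)) :
    ∀ j k, k ≤ j → j + k ≤ n → a k ≤ a j := by
  intro j k hk hjk
  by_cases hj : 2 * j ≤ n + 1
  · exact mono_le a n hmono j k hk hj
  · have hj' : j ≤ n := by omega
    rw [hsymm j hj']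
    exact mono_le a n hmono (n - j) k (by omega) (by omega)

lemma omega_succ (p r m : ℕ) :
    Omega p (r + 1) m
      = ∑ i ∈ Finset.range p, (if i ≤ m then Omega p r (m - i) else 0) := by
  unfold Omega
  rw [pow_succ, Finset.mul_sum, finset_sum_coeff]
  refine Finset.sum_congr rfl fun i _ => ?_
  rw [coeff_mul_X_pow']

lemma conv_step (a : ℕ → ℕ) (p m : ℕ) (hp : 1 ≤ p) :
    (∑ i ∈ Finset.range p, if i ≤ m + 1 then a (m + 1 - i) else 0)
        + (if p - 1 ≤ m then a (m - (p - 1)) else 0)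
      = (∑ i ∈ Finset.range p, if i ≤ m then a (m - i) else 0) + a (m + 1) := by
  obtain ⟨q, rfl⟩ : ∃ q, p = q + 1 := ⟨p - 1, by omega⟩
  rw [Finset.sum_range_succ', Finset.sum_range_succ]
  have hterm : ∀ i, (if i + 1 ≤ m + 1 then a (m + 1 - (i + 1)) else 0)
      = (if i ≤ m then a (m - i) else 0) := by
    intro i
    by_cases h : i ≤ m
    · rw [if_pos (by omega), if_pos h]
      congr 1
      omega
    · rw [if_neg (by omega), if_neg h]
  simp only [hterm]
  rw [if_pos (Nat.zero_le (m + 1)), Nat.sub_zero, Nat.add_sub_cancel]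
  ring

end OmegaAux

open OmegaAux in
theorem Omega_max_at_middle (p r : ℕ) (hp : 2 ≤ p) (hr : 1 ≤ r) :
    ∀ m ≤ r * (p - 1), Omega p r m ≤ Omega p r (r * (p - 1) / 2) := by
  -- main invariant by induction on r
  have key : ∀ r : ℕ,
      (∀ m, r * (p - 1) < m → Omega p r m = 0) ∧
      (∀ m ≤ r * (p - 1), Omega p r m = Omega p r (r * (p - 1) - m)) ∧
      (∀ m, 2 * m + 1 ≤ r * (p - 1) → Omega p r m ≤ Omega p r (m + 1)) := by
    intro r
    induction r with
    | zero =>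
      refine ⟨?_, ?_, ?_⟩
      · intro m hm
        simp only [Nat.zero_mul] at hm
        simp only [Omega, pow_zero, coeff_one]
        rw [if_neg (by omega)]
      · intro m hm
        simp only [Nat.zero_mul, Nat.le_zero] at hm
        simp [hm]
      · intro m hm; omega
    | succ r ih =>
      obtain ⟨hvan, hsymm, hmono⟩ := ih
      set n := r * (p - 1) with hn
      have hU : ∀ j k, k ≤ j → j + k ≤ n → Omega p r k ≤ Omega p r j :=
        U_of _ n hsymm hmono
      have hN : (r + 1) * (p - 1) = n + (p - 1) := by ring
      set N := (r + 1) * (p - 1) with hNdef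
      have hp1 : 1 ≤ p - 1 := by omega
      refine ⟨?_, ?_, ?_⟩
      · -- vanishing
        intro m hm
        rw [omega_succ]
        refine Finset.sum_eq_zero fun i hi => ?_
        simp only [Finset.mem_range] at hi
        split
        · exact hvan _ (by omega)
        · rfl
      · -- symmetry
        intro m hm
        rw [omega_succ, omega_succ]
        rw [← Finset.sum_range_reflect]
        refine Finset.sum_congr rfl fun i hi => ?_
        simp only [Finset.mem_range] at hi
        by_cases h1 : i ≤ N - m
        · by_cases h2 : N - m - i ≤ n
          · rw [if_pos h1, if_pos (show p - 1 - i ≤ m by omega),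
              hsymm (N - m - i) h2]
            congr 1
            omega
          · rw [if_pos h1, if_neg (show ¬ p - 1 - i ≤ m by omega),
              hvan _ (by omega)]
        · rw [if_neg h1, if_pos (show p - 1 - i ≤ m by omega),
            hvan _ (by omega)]
      · -- monotone up to middle
        intro m hm
        -- identity: b (m+1) + T = b m + a (m+1)
        have hid : Omega p (r + 1) (m + 1)
              + (if p - 1 ≤ m then Omega p r (m - (p - 1)) else 0)
            = Omega p (r + 1) m + Omega p r (m + 1) := by
          rw [omega_succ, omega_succ]
          exact conv_step (Omega p r) p m (by omega)
        have hT : (if p - 1 ≤ m then Omega p r (m - (p - 1)) else 0)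
            ≤ Omega p r (m + 1) := by
          split
          · exact hU (m + 1) (m - (p - 1)) (by omega) (by omega)
          · exact Nat.zero_le _
        omega
  obtain ⟨hvan, hsymm, hmono⟩ := key r
  have hU := U_of _ (r * (p - 1)) hsymm hmono
  intro m hm
  set n := r * (p - 1)
  by_cases h : m ≤ n / 2
  · exact hU (n / 2) m h (by omega)
  · rw [hsymm m hm]
    exact hU (n / 2) (n - m) (by omega) (by omega)
end

section
/- For every integer r ≥ 1, one has r · C(r, ⌊r/2⌋) ≥ 2^{r-1} + Σ_{i=⌈(r+1)/2⌉}^{r} C(r,i) - 1, and equality holds only when r = 1 or r = 2. -/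
/-! For `r ≥ 3` write `M = C(r, ⌊r/2⌋)`. Bounding every inner binomial coefficient by `M` gives
`2^r ≤ (r - 1) M + 2`, and pairing `i` with `r - i` shows that the upper half of row `r` sums to
at most `(2^r + M) / 2`. Together these give `2^(r-1) + Σ ≤ r M` as soon as `M ≥ 3`, which holds
since `M ≥ C(r, 1) = r`. So the inequality of the theorem is strict; `r = 1, 2` are checked directly. -/

open Finset

namespace Nat

theorem two_pow_le_pred_mul_choose_half_add_two (r : ℕ) :
    2 ^ r ≤ (r - 1) * r.choose (r / 2) + 2 := by
  obtain _ | r := r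
  · simp
  have hsplit : ∑ i ∈ range (r + 2), (r + 1).choose i
      = (r + 1).choose 0 + ∑ i ∈ Ico 1 (r + 1), (r + 1).choose i + (r + 1).choose (r + 1) := by
    rw [sum_range_succ, range_eq_Ico, sum_eq_sum_Ico_succ_bot (by omega)]
  have hinner : ∑ i ∈ Ico 1 (r + 1), (r + 1).choose i ≤ r * (r + 1).choose ((r + 1) / 2) := by
    calc ∑ i ∈ Ico 1 (r + 1), (r + 1).choose i
        ≤ ∑ _i ∈ Ico 1 (r + 1), (r + 1).choose ((r + 1) / 2) :=
          sum_le_sum fun i _ => choose_le_middle i (r + 1)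
      _ = r * (r + 1).choose ((r + 1) / 2) := by simp
  rw [← sum_range_choose, hsplit, choose_zero_right, choose_self, add_tsub_cancel_right]
  omega

theorem two_mul_sum_Icc_choose_le (r : ℕ) :
    2 * ∑ i ∈ Icc ((r + 1) / 2) r, r.choose i ≤ 2 ^ r + r.choose (r / 2) := by
  set upper := Icc ((r + 1) / 2) r
  set lower := Icc 0 (r / 2)
  have hreflect : ∑ i ∈ upper, r.choose i = ∑ i ∈ lower, r.choose i := by
    refine sum_nbij' (r - ·) (r - ·) ?_ ?_ ?_ ?_ ?_ <;>
      simp only [upper, lower, mem_Icc]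
    · intro i hi; omega
    · intro i hi; omega
    · intro i hi; omega
    · intro i hi; omega
    · intro i hi; exact (choose_symm hi.2).symm
  have hunion : upper ∪ lower = range (r + 1) := by
    ext i; simp only [upper, lower, mem_union, mem_Icc, mem_range]; omega
  have hinter : upper ∩ lower ⊆ {r / 2} := by
    intro i; simp only [upper, lower, mem_inter, mem_Icc, mem_singleton]; omega
  have hmiddle : ∑ i ∈ upper ∩ lower, r.choose i ≤ r.choose (r / 2) :=
    (sum_le_sum_of_subset hinter).trans_eq (sum_singleton _ _)
  have hsplit := sum_union_inter (s₁ := upper) (s₂ := lower) (f := r.choose)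
  rw [hunion, sum_range_choose, ← hreflect] at hsplit
  omega

theorem two_pow_pred_add_sum_Icc_choose_le {r : ℕ} (hr : 3 ≤ r) :
    2 ^ (r - 1) + ∑ i ∈ Icc ((r + 1) / 2) r, r.choose i ≤ r * r.choose (r / 2) := by
  obtain ⟨k, rfl⟩ : ∃ k, r = k + 1 := ⟨r - 1, by omega⟩
  have hpow : 2 ^ (k + 1) = 2 * 2 ^ k := pow_succ' ..
  have hrow := two_pow_le_pred_mul_choose_half_add_two (k + 1)
  have hhalf := two_mul_sum_Icc_choose_le (k + 1)
  have hmiddle : 3 ≤ (k + 1).choose ((k + 1) / 2) := by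
    have := choose_le_middle 1 (k + 1)
    rw [choose_one_right] at this
    omega
  simp only [add_tsub_cancel_right] at hrow ⊢
  linarith

end Nat

theorem central_binom_sum_ineq (r : ℕ) (hr : 1 ≤ r) :
    2 ^ (r - 1) + (∑ i ∈ Finset.Icc ((r + 1) / 2) r, Nat.choose r i) - 1
      ≤ r * Nat.choose r (r / 2) ∧
    (r * Nat.choose r (r / 2)
        = 2 ^ (r - 1) + (∑ i ∈ Finset.Icc ((r + 1) / 2) r, Nat.choose r i) - 1 →
      r = 1 ∨ r = 2) := by
  obtain rfl | rfl | hr3 : r = 1 ∨ r = 2 ∨ 3 ≤ r := by omega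
  · exact ⟨by decide, fun _ => .inl rfl⟩
  · exact ⟨by decide, fun _ => .inr rfl⟩
  · have hbound := Nat.two_pow_pred_add_sum_Icc_choose_le hr3
    have hpos : 1 ≤ 2 ^ (r - 1) := Nat.one_le_two_pow
    exact ⟨by omega, fun _ => by omega⟩
end

section
/- For the group H = (ℤ/p)^r with p prime, the dimension over F_p of the quotient Δ^k/Δ^{k+1} of consecutive powers of the augmentation ideal Δ of F_p[(ℤ/p)^r] equals the coefficient of x^k in the polynomial (1+x+...+x^{p-1})^r, for every k ≥ 0. -/
/-! Let `εᵢ = gᵢ - 1` for the standard generators `gᵢ` of `H = (ℤ/p)^r`. In characteristic `p`,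
`εᵢ ^ p = gᵢ ^ p - 1 = 0`, and since `gᵢ = 1 + εᵢ` the monomials `ε^e` with all `eᵢ < p` span
`F_p[H]`; there are `p ^ r = dim F_p[H]` of them, so they form a basis. The monomials multiply by
adding exponents, `Δ` is spanned by those of positive degree, and hence `Δ^k` is spanned by the
basis monomials of total degree `≥ k`. So `dim Δ^k/Δ^{k+1}` counts the `e ∈ {0, …, p-1}^r` with
`∑ eᵢ = k`, which is the coefficient of `x^k` in `(1 + x + ⋯ + x^{p-1})^r`. -/

open Polynomial

/-- The augmentation ideal of the group algebra `F_p[H]`. -/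
noncomputable def augIdeal (p : ℕ) (H : Type*) [Group H] :
    Ideal (MonoidAlgebra (ZMod p) H) :=
  RingHom.ker ((MonoidAlgebra.lift (ZMod p) (ZMod p) H) 1)

/-- `dim_{F_p} Δ^k/Δ^{k+1}`, computed as a difference of dimensions. -/
noncomputable def lambda (p : ℕ) (H : Type*) [Group H] (k : ℕ) : ℕ :=
  Module.finrank (ZMod p) (((augIdeal p H) ^ k).restrictScalars (ZMod p))
    - Module.finrank (ZMod p) (((augIdeal p H) ^ (k + 1)).restrictScalars (ZMod p))

open MonoidAlgebra Finset

noncomputable section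

variable (p : ℕ) {ι : Type*} [DecidableEq ι]

local notation "𝔽ₚ[" ι "]" => MonoidAlgebra (ZMod p) (Multiplicative (ι → ZMod p))

def augGen (i : ι) : 𝔽ₚ[ι] := of (ZMod p) _ (Multiplicative.ofAdd (Pi.single i 1)) - 1

lemma augGen_mem_augIdeal (i : ι) : augGen p i ∈ augIdeal p (Multiplicative (ι → ZMod p)) := by
  simp [augIdeal, augGen]

lemma augGen_pow_prime [Fact p.Prime] (i : ι) : augGen p i ^ p = 0 := by
  have := charP_of_injective_algebraMap' (ZMod p) (A := 𝔽ₚ[ι]) p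
  have hp : p • (Pi.single i 1 : ι → ZMod p) = 0 := by rw [← Pi.single_smul]; simp
  rw [augGen, sub_pow_char, ← map_pow, ← ofAdd_nsmul, hp, ofAdd_zero, map_one, one_pow, sub_self]

variable [Fintype ι]

def augMonomial (e : ι → ℕ) : 𝔽ₚ[ι] := ∏ i, augGen p i ^ e i

lemma augMonomial_zero : augMonomial p (0 : ι → ℕ) = 1 := by
  simp [augMonomial]

lemma augMonomial_add (e e' : ι → ℕ) :
    augMonomial p (e + e') = augMonomial p e * augMonomial p e' := by
  simp [augMonomial, pow_add, prod_mul_distrib]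

lemma augMonomial_single (i : ι) : augMonomial p (Pi.single i 1) = augGen p i := by
  rw [augMonomial, prod_eq_single i] <;> simp +contextual

lemma augMonomial_mem_augIdeal_pow (e : ι → ℕ) :
    augMonomial p e ∈ augIdeal p (Multiplicative (ι → ZMod p)) ^ ∑ i, e i := by
  rw [← prod_pow_eq_pow_sum]
  exact Ideal.prod_mem_prod fun i _ ↦ Ideal.pow_mem_pow (augGen_mem_augIdeal p i) _

def augFiltration (k : ℕ) : Submodule (ZMod p) 𝔽ₚ[ι] :=
  Submodule.span (ZMod p) (augMonomial p '' {e | k ≤ ∑ i, e i})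

lemma augMonomial_mem_augFiltration {k : ℕ} {e : ι → ℕ} (he : k ≤ ∑ i, e i) :
    augMonomial p e ∈ augFiltration p k :=
  Submodule.subset_span ⟨e, he, rfl⟩

lemma augFiltration_mul_le (j k : ℕ) :
    augFiltration p j * augFiltration p k ≤ (augFiltration p (j + k) : Submodule _ 𝔽ₚ[ι]) := by
  rw [augFiltration, augFiltration, Submodule.span_mul_span]
  refine Submodule.span_le.2 ?_
  rintro _ ⟨_, ⟨e, he, rfl⟩, _, ⟨e', he', rfl⟩, rfl⟩
  show augMonomial p e * augMonomial p e' ∈ _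
  rw [← augMonomial_add]
  refine augMonomial_mem_augFiltration p ?_
  simp only [Pi.add_apply, sum_add_distrib]
  exact Nat.add_le_add he he'

lemma of_mem_augFiltration_zero [NeZero p] (g : Multiplicative (ι → ZMod p)) :
    of (ZMod p) _ g ∈ augFiltration p 0 := by
  have h1 : (1 : 𝔽ₚ[ι]) ∈ augFiltration p 0 :=
    augMonomial_zero (ι := ι) p ▸ augMonomial_mem_augFiltration p (Nat.zero_le _)
  let S := (augFiltration p 0 : Submodule _ 𝔽ₚ[ι]).toSubalgebra h1
    fun x y hx hy ↦ augFiltration_mul_le p 0 0 (Submodule.mul_mem_mul hx hy)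
  have hgen (i : ι) : of (ZMod p) _ (Multiplicative.ofAdd (Pi.single i 1)) ∈ S := by
    rw [← sub_add_cancel (of _ _ _) 1]
    refine add_mem ?_ (one_mem S)
    have := augMonomial_mem_augFiltration p (k := 0) (e := Pi.single i 1) (Nat.zero_le _)
    rwa [augMonomial_single] at this
  have hg : g = ∏ i, Multiplicative.ofAdd (Pi.single i 1) ^ (g.toAdd i).val := by
    simp_rw [← ofAdd_nsmul, ← ofAdd_sum, ← Pi.single_smul]; simp [univ_sum_single]
  change of (ZMod p) _ g ∈ S
  rw [hg, map_prod]
  exact prod_mem fun i _ ↦ by rw [map_pow]; exact pow_mem (hgen i) _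

lemma augFiltration_zero [NeZero p] : augFiltration p 0 = (⊤ : Submodule _ 𝔽ₚ[ι]) := by
  refine Submodule.eq_top_iff'.2 fun x ↦ ?_
  induction x using MonoidAlgebra.induction_on with
  | of g => exact of_mem_augFiltration_zero p g
  | add x y hx hy => exact add_mem hx hy
  | smul c x hx => exact Submodule.smul_mem _ c hx

lemma augIdeal_le_augFiltration_one [NeZero p] :
    (augIdeal p (Multiplicative (ι → ZMod p))).restrictScalars (ZMod p) ≤ augFiltration p 1 := by
  -- `f x = x - ε(x) • 1`, with `ε` the augmentation, fixes `Δ = ker ε` and sends every monomial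
  -- into `augFiltration p 1`; the monomials span the whole algebra.
  let f : 𝔽ₚ[ι] →ₗ[ZMod p] 𝔽ₚ[ι] := LinearMap.id - (Algebra.linearMap (ZMod p) 𝔽ₚ[ι]) ∘ₗ
    (MonoidAlgebra.lift (ZMod p) (ZMod p) (Multiplicative (ι → ZMod p)) 1).toLinearMap
  have hf_of_mem {x : 𝔽ₚ[ι]} (hx : x ∈ augIdeal p _) : f x = x := by
    simp [f, (RingHom.mem_ker).1 hx]
  have hf : augFiltration p 0 ≤ (augFiltration p 1).comap f := by
    refine Submodule.span_le.2 ?_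
    rintro _ ⟨e, -, rfl⟩
    rcases Nat.eq_zero_or_pos (∑ i, e i) with he | he
    · obtain rfl : e = 0 := funext fun i ↦ sum_eq_zero_iff.1 he i (mem_univ i)
      simp [f, augMonomial_zero, one_def]
    · have hmem : augMonomial p e ∈ augIdeal p _ :=
        pow_one (augIdeal p (Multiplicative (ι → ZMod p))) ▸
          Ideal.pow_le_pow_right he (augMonomial_mem_augIdeal_pow p e)
      simpa [hf_of_mem hmem] using augMonomial_mem_augFiltration p he
  intro x hx
  have := hf (by rw [augFiltration_zero]; exact Submodule.mem_top (x := x))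
  rwa [Submodule.mem_comap, hf_of_mem hx] at this

lemma restrictScalars_augIdeal_pow [NeZero p] (k : ℕ) :
    (augIdeal p (Multiplicative (ι → ZMod p)) ^ k).restrictScalars (ZMod p) =
      augFiltration p k := by
  refine le_antisymm ?_ (Submodule.span_le.2 ?_)
  · induction k with
    | zero =>
      rw [pow_zero, Ideal.one_eq_top, Submodule.restrictScalars_top, augFiltration_zero]
    | succ k ih =>
      rw [pow_succ, Submodule.restrictScalars_mul]
      exact (mul_le_mul' ih (augIdeal_le_augFiltration_one p)).trans
        (augFiltration_mul_le p k 1)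
  · rintro _ ⟨e, he, rfl⟩
    exact Ideal.pow_le_pow_right he (augMonomial_mem_augIdeal_pow p e)

variable [Fact p.Prime]

lemma augMonomial_eq_zero {e : ι → ℕ} {i : ι} (h : p ≤ e i) : augMonomial p e = 0 :=
  prod_eq_zero (mem_univ i) (pow_eq_zero_of_le h (augGen_pow_prime p i))

lemma augFiltration_eq_span (k : ℕ) :
    augFiltration p k = Submodule.span (ZMod p) (Set.range
      fun e : {e : ι → Fin p // k ≤ ∑ i, (e i : ℕ)} ↦ augMonomial p fun i ↦ e.1 i) := by
  refine le_antisymm (Submodule.span_le.2 ?_) (Submodule.span_le.2 ?_)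
  · rintro _ ⟨e, he, rfl⟩
    by_cases h : ∀ i, e i < p
    · exact Submodule.subset_span ⟨⟨fun i ↦ ⟨e i, h i⟩, he⟩, rfl⟩
    · obtain ⟨i, hi⟩ := not_forall.1 h
      rw [augMonomial_eq_zero p (not_lt.1 hi)]
      exact zero_mem _
  · rintro _ ⟨⟨e, he⟩, rfl⟩
    exact augMonomial_mem_augFiltration p he

lemma linearIndependent_augMonomial :
    LinearIndependent (ZMod p) fun e : ι → Fin p ↦ augMonomial p fun i ↦ e i := by
  refine linearIndependent_of_top_le_span_of_card_eq_finrank ?_ ?_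
  · rw [← augFiltration_zero, augFiltration_eq_span]
    refine Submodule.span_mono ?_
    rintro _ ⟨e, rfl⟩
    exact ⟨e.1, rfl⟩
  · rw [Module.finrank_eq_card_basis (MonoidAlgebra.basis _ _)]
    simp [ZMod.card]

lemma finrank_augIdeal_pow (k : ℕ) :
    Module.finrank (ZMod p)
        ((augIdeal p (Multiplicative (ι → ZMod p)) ^ k).restrictScalars (ZMod p)) =
      #{e : ι → Fin p | k ≤ ∑ i, (e i : ℕ)} := by
  rw [restrictScalars_augIdeal_pow, augFiltration_eq_span, ← Fintype.card_subtype]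
  exact finrank_span_eq_card
    ((linearIndependent_augMonomial p).comp Subtype.val Subtype.val_injective)

lemma lambda_eq_card (k : ℕ) :
    lambda p (Multiplicative (ι → ZMod p)) k = #{e : ι → Fin p | ∑ i, (e i : ℕ) = k} := by
  have hsplit : #{e : ι → Fin p | k ≤ ∑ i, (e i : ℕ)} =
      #{e : ι → Fin p | ∑ i, (e i : ℕ) = k} + #{e : ι → Fin p | k + 1 ≤ ∑ i, (e i : ℕ)} := by
    rw [← card_union_of_disjoint (disjoint_filter.2 fun _ _ ↦ by omega), ← filter_or]
    congr 1
    ext e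
    simp only [mem_filter, mem_univ, true_and]
    omega
  rw [lambda, finrank_augIdeal_pow, finrank_augIdeal_pow, hsplit, Nat.add_sub_cancel]

end

lemma coeff_geom_sum_pow {R : Type*} [CommSemiring R] (n k : ℕ) (ι : Type*) [Fintype ι]
    [DecidableEq ι] :
    ((∑ i ∈ range n, (X : R[X]) ^ i) ^ Fintype.card ι).coeff k =
      #{e : ι → Fin n | ∑ i, (e i : ℕ) = k} := by
  rw [← Fin.sum_univ_eq_sum_range, ← card_univ, ← prod_const, prod_univ_sum]
  simp_rw [prod_pow_eq_pow_sum, finsetSum_coeff, coeff_X_pow]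
  simp [sum_boole, eq_comm]

theorem lambda_eq_Omega_general (p : ℕ) (hp : p.Prime) (r : ℕ) (k : ℕ) :
    lambda p (Multiplicative (Fin r → ZMod p)) k
      = (((∑ i ∈ Finset.range p, (X : Polynomial ℕ) ^ i) ^ r).coeff k) := by
  have : Fact p.Prime := ⟨hp⟩
  have := coeff_geom_sum_pow (R := ℕ) p k (Fin r)
  rw [Fintype.card_fin, Nat.cast_id] at this
  rw [lambda_eq_card, this]

theorem lambda_eq_Omega (p : ℕ) (hp : p.Prime) (r : ℕ) (hr : 1 ≤ r) (k : ℕ) :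
    lambda p (Multiplicative (Fin r → ZMod p)) k
      = (((∑ i ∈ Finset.range p, (X : Polynomial ℕ) ^ i) ^ r).coeff k) :=
  lambda_eq_Omega_general p hp r k
end

section
/- Let p be a prime and r ≥ 1. The augmentation ideal Δ of F_p[(ℤ/p)^r] is nilpotent; specifically Δ^{r(p-1)+1} = 0. -/
/-!
The augmentation ideal is spanned by the elements `g - 1`, and since the group is generated by the
`r` standard basis vectors `eᵢ`, already by the `r` elements `xᵢ = eᵢ - 1`. In characteristic `p`,
`xᵢ ^ p = eᵢ ^ p - 1 = 0`. A product of `r (p - 1) + 1` of the `xᵢ` contains some `xᵢ` at least `p`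
times, so it vanishes.
-/

open Set Ideal MonoidAlgebra

namespace Ideal

variable {R : Type*} [CommSemiring R]

theorem sup_pow_add_add_one_le (I J : Ideal R) (m n : ℕ) :
    (I ⊔ J) ^ (m + n + 1) ≤ I ^ (m + 1) ⊔ J ^ (n + 1) := by
  rw [← add_eq_sup, ← add_eq_sup, add_pow, sum_eq_sup]
  refine Finset.sup_le fun i _ => ?_
  by_cases hi : m + 1 ≤ i
  · exact mul_le_left.trans (mul_le_left.trans ((pow_le_pow_right hi).trans le_sup_left))
  · refine mul_le_left.trans (mul_le_right.trans ((pow_le_pow_right ?_).trans le_sup_right))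
    omega

theorem finsetSup_pow_eq_bot {ι : Type*} (s : Finset ι) (I : ι → Ideal R) {n : ℕ}
    (h : ∀ i ∈ s, I i ^ (n + 1) = ⊥) : s.sup I ^ (s.card * n + 1) = ⊥ := by
  classical
  induction s using Finset.induction_on with
  | empty => simp
  | insert i s hi ih =>
    rw [Finset.sup_insert, Finset.card_insert_of_notMem hi, eq_bot_iff]
    calc (I i ⊔ s.sup I) ^ ((s.card + 1) * n + 1)
        = (I i ⊔ s.sup I) ^ (n + s.card * n + 1) := by ring_nf
      _ ≤ I i ^ (n + 1) ⊔ s.sup I ^ (s.card * n + 1) := sup_pow_add_add_one_le ..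
      _ = ⊥ := by
        rw [h i (Finset.mem_insert_self i s), ih fun j hj => h j (Finset.mem_insert_of_mem hj),
          sup_bot_eq]

theorem span_range_pow_eq_bot {ι : Type*} [Fintype ι] (x : ι → R) {n : ℕ}
    (hx : ∀ i, x i ^ (n + 1) = 0) : span (range x) ^ (Fintype.card ι * n + 1) = ⊥ := by
  have hspan : span (range x) = Finset.univ.sup fun i => span {x i} := by
    rw [← iUnion_singleton_eq_range, span_iUnion, Finset.sup_univ_eq_iSup]
  rw [hspan]
  exact finsetSup_pow_eq_bot _ _ fun i _ => by
    rw [span_singleton_pow, hx, span_singleton_eq_bot]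

end Ideal

theorem sub_one_pow_expChar_eq_zero {R : Type*} [Ring R] {p : ℕ} [ExpChar R p] {u : R}
    (hu : u ^ p = 1) : (u - 1) ^ p = 0 := by
  rw [sub_pow_expChar_of_commute p (Commute.one_right u), hu, one_pow, sub_self]

namespace MonoidAlgebra

theorem sub_algebraMap_lift_one_mem_span {k G : Type*} [CommRing k] [Monoid G] (a : k[G]) :
    a - algebraMap k _ (lift k k G 1 a) ∈ span (range fun g => of k G g - 1) := by
  induction a using MonoidAlgebra.induction_on with
  | of g =>
    rw [lift_of, MonoidHom.one_apply, map_one]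
    exact subset_span (mem_range_self g)
  | add a b ha hb => simpa only [map_add, add_sub_add_comm] using add_mem ha hb
  | smul c a ha =>
    rw [map_smul, smul_eq_mul, map_mul, Algebra.smul_def, ← mul_sub]
    exact mul_mem_left _ _ ha

theorem ker_lift_one_eq_span {k G : Type*} [CommRing k] [Monoid G] :
    RingHom.ker (lift k k G 1) = span (range fun g => of k G g - 1) := by
  refine le_antisymm (fun a ha => ?_) (span_le.2 ?_)
  · simpa [RingHom.mem_ker.1 ha] using sub_algebraMap_lift_one_mem_span a
  · rintro _ ⟨g, rfl⟩
    simp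

theorem span_range_of_sub_one_le {k G ι : Type*} [Ring k] [Group G] {s : ι → G}
    (hs : Subgroup.closure (range s) = ⊤) :
    span (range fun g => of k G g - 1) ≤ span (range fun i => of k G (s i) - 1) := by
  set J := span (range fun i => of k G (s i) - 1)
  refine span_le.2 ?_
  rintro _ ⟨g, rfl⟩
  have hg : g ∈ Subgroup.closure (range s) := hs ▸ Subgroup.mem_top g
  induction hg using Subgroup.closure_induction with
  | mem g hg =>
    obtain ⟨i, rfl⟩ := hg
    exact subset_span (mem_range_self i)
  | one =>
    show of k G 1 - 1 ∈ J
    rw [map_one, sub_self]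
    exact J.zero_mem
  | mul a b _ _ ha hb =>
    have : of k G (a * b) - 1 = of k G a * (of k G b - 1) + (of k G a - 1) := by
      rw [map_mul]; noncomm_ring
    show of k G (a * b) - 1 ∈ J
    exact this ▸ add_mem (mul_mem_left _ _ hb) ha
  | inv a _ ha =>
    have : of k G a⁻¹ - 1 = -of k G a⁻¹ * (of k G a - 1) := by
      rw [neg_mul, mul_sub, ← map_mul, inv_mul_cancel, map_one]; noncomm_ring
    show of k G a⁻¹ - 1 ∈ J
    exact this ▸ mul_mem_left _ _ ha

end MonoidAlgebra

theorem closure_range_ofAdd_single_eq_top (ι : Type*) [Fintype ι] [DecidableEq ι] (n : ℕ) :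
    Subgroup.closure (range fun i => Multiplicative.ofAdd (Pi.single i 1 : ι → ZMod n)) = ⊤ := by
  refine eq_top_iff.2 fun g _ => ?_
  rw [← ofAdd_toAdd g, ← Finset.univ_sum_single g.toAdd, ofAdd_sum]
  refine Subgroup.prod_mem _ fun i _ => ?_
  have : Multiplicative.ofAdd (Pi.single i (g.toAdd i) : ι → ZMod n)
      = Multiplicative.ofAdd (Pi.single i 1 : ι → ZMod n) ^ ((g.toAdd i).cast : ℤ) := by
    rw [← ofAdd_zsmul, ← Pi.single_smul, zsmul_eq_mul, mul_one, ZMod.intCast_zmod_cast]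
  exact this ▸ Subgroup.zpow_mem _ (Subgroup.subset_closure (mem_range_self i)) _

theorem augIdeal_nilpotent_general (p : ℕ) (hp : p.Prime) (r : ℕ) :
    (augIdeal p (Multiplicative (Fin r → ZMod p))) ^ (r * (p - 1) + 1) = ⊥ := by
  have : Fact p.Prime := ⟨hp⟩
  set H := Multiplicative (Fin r → ZMod p)
  have : CharP (MonoidAlgebra (ZMod p) H) p := charP_of_injective_algebraMap' (ZMod p) p
  set x : Fin r → MonoidAlgebra (ZMod p) H :=
    fun i => of (ZMod p) H (.ofAdd (Pi.single i 1)) - 1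
  have hΔ : augIdeal p H ≤ span (range x) :=
    ker_lift_one_eq_span.le.trans
      (span_range_of_sub_one_le (closure_range_ofAdd_single_eq_top _ p))
  have hH : ∀ g : H, g ^ p = 1 := fun g => by
    have : p • g.toAdd = 0 := by ext; simp
    rw [← ofAdd_toAdd g, ← ofAdd_nsmul, this, ofAdd_zero]
  have hx : ∀ i, x i ^ (p - 1 + 1) = 0 := fun i => by
    rw [Nat.sub_add_cancel hp.one_le]
    exact sub_one_pow_expChar_eq_zero (by rw [← map_pow, hH, map_one])
  have hnil := span_range_pow_eq_bot x hx
  rw [Fintype.card_fin] at hnil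
  exact eq_bot_iff.2 (hnil ▸ pow_right_mono hΔ _)

theorem augIdeal_nilpotent (p : ℕ) (hp : p.Prime) (r : ℕ) (hr : 1 ≤ r) :
    (augIdeal p (Multiplicative (Fin r → ZMod p))) ^ (r * (p - 1) + 1) = ⊥ :=
  augIdeal_nilpotent_general p hp r
end
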